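/- arXiv:2502.21091 — 4 statements merged into one kernel-verified Lean document; each statement's English description precedes it below -/
import Mathlib

section
/- Let A_s ∈ ℝ^{n×n}, B_s ∈ ℝ^{n×m}, and data matrices X_-, U_- with X_+ = A_s X_- + B_s U_-. Assume there exist K ∈ ℝ^{m×n}, L ∈ ℝ^{m×p} with A_s + B_s K = A_m and B_s L = B_m. If the stacked matrix [X_-; U_-] ∈ ℝ^{(n+m)×T} has rank n+m (full row rank), then there exist V_1, V_2 with X_- V_1 = I, X_- V_2 = 0, X_+ V_1 = A_m, and X_+ V_2 = B_m. -/
open Matrix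

/-!
Full row rank of `[X₋; U₋]` lets one prescribe `X₋ V` and `U₋ V` arbitrarily. Choosing
`(X₋ V₁, U₋ V₁) = (I, K)` and `(X₋ V₂, U₋ V₂) = (0, L)`, the data equation
`X₊ = A_s X₋ + B_s U₋` gives `X₊ V₁ = A_s + B_s K = A_m` and `X₊ V₂ = B_s L = B_m`.
-/

namespace Matrix

variable {K m₁ m₂ m n q : Type*} [Field K] [Fintype m] [Fintype n]

theorem range_mulVecLin_eq_top_of_rank_eq_card {A : Matrix m n K}
    (hA : A.rank = Fintype.card m) : LinearMap.range A.mulVecLin = ⊤ := by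
  apply Submodule.eq_top_of_finrank_eq
  rwa [Module.finrank_fintype_fun_eq_card]

theorem exists_mul_eq_one_of_rank_eq_card [DecidableEq m] {A : Matrix m n K}
    (hA : A.rank = Fintype.card m) : ∃ B : Matrix n m K, A * B = 1 := by
  obtain ⟨g, hg⟩ := A.mulVecLin.exists_rightInverse_of_surjective
    (range_mulVecLin_eq_top_of_rank_eq_card hA)
  classical
  refine ⟨LinearMap.toMatrix' g, toLin'.injective ?_⟩
  rw [toLin'_mul, toLin'_toMatrix', toLin'_one]
  exact hg

theorem exists_mul_eq_of_rank_fromRows_eq_card [Fintype m₁] [Fintype m₂]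
    {X : Matrix m₁ n K} {U : Matrix m₂ n K}
    (hrank : (fromRows X U).rank = Fintype.card m₁ + Fintype.card m₂)
    (M : Matrix m₁ q K) (N : Matrix m₂ q K) : ∃ V : Matrix n q K, X * V = M ∧ U * V = N := by
  classical
  obtain ⟨W, hW⟩ := exists_mul_eq_one_of_rank_eq_card (A := fromRows X U)
    (by rw [hrank, Fintype.card_sum])
  refine ⟨W * fromRows M N, ?_⟩
  have hV : fromRows X U * (W * fromRows M N) = fromRows M N := by
    rw [← Matrix.mul_assoc, hW, Matrix.one_mul]
  rwa [fromRows_mul, fromRows_ext_iff] at hV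

end Matrix

theorem stmt_1 (n m p T : ℕ)
    (As Am : Matrix (Fin n) (Fin n) ℝ) (Bs : Matrix (Fin n) (Fin m) ℝ)
    (Bm : Matrix (Fin n) (Fin p) ℝ)
    (Xm : Matrix (Fin n) (Fin T) ℝ) (Um : Matrix (Fin m) (Fin T) ℝ)
    (Xp : Matrix (Fin n) (Fin T) ℝ) (hXp : Xp = As * Xm + Bs * Um)
    (K : Matrix (Fin m) (Fin n) ℝ) (L : Matrix (Fin m) (Fin p) ℝ)
    (hK : As + Bs * K = Am) (hL : Bs * L = Bm)
    (hrank : (Matrix.fromRows Xm Um).rank = n + m) :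
    ∃ (V₁ : Matrix (Fin T) (Fin n) ℝ) (V₂ : Matrix (Fin T) (Fin p) ℝ),
      Xm * V₁ = 1 ∧ Xm * V₂ = 0 ∧ Xp * V₁ = Am ∧ Xp * V₂ = Bm := by
  have hrank' : (fromRows Xm Um).rank = Fintype.card (Fin n) + Fintype.card (Fin m) := by
    simpa using hrank
  obtain ⟨V₁, hX₁, hU₁⟩ := exists_mul_eq_of_rank_fromRows_eq_card hrank' 1 K
  obtain ⟨V₂, hX₂, hU₂⟩ := exists_mul_eq_of_rank_fromRows_eq_card hrank' 0 L
  refine ⟨V₁, V₂, hX₁, hX₂, ?_, ?_⟩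
  · rw [hXp, Matrix.add_mul, Matrix.mul_assoc, Matrix.mul_assoc, hX₁, hU₁, Matrix.mul_one, hK]
  · rw [hXp, Matrix.add_mul, Matrix.mul_assoc, Matrix.mul_assoc, hX₂, hU₂, Matrix.mul_zero,
      zero_add, hL]
end

section
/- Suppose B_m ∈ ℝ^{n×m} has full column rank m (i.e., p = m), and suppose data satisfy X_+ = A_s X_- + B_s U_- with A_s + B_s K = A_m and B_s L = B_m for some K, L. If the column space of [[I,0],[A_m,B_m]] is contained in the column space of [X_-; X_+], then rank([X_-; U_-]) = n + m. -/
/-!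
Since `X₊ = A_s X₋ + B_s U₋`, the stacked data `[X₋; X₊]` equal `[[I, 0], [A_s, B_s]] [X₋; U₋]`,
so `rank [X₋; X₊] ≤ rank [X₋; U₋] ≤ n + m`. Conversely, the column-space inclusion gives
`rank [X₋; X₊] ≥ rank [[I, 0], [A_m, B_m]]`, and this block-triangular matrix is injective,
hence of rank `n + m`, because `B_m` has full column rank.
-/

open Matrix

namespace Matrix

variable {R : Type*} {k l m : Type*} [Fintype l] [Fintype m]

theorem mulVec_injective_of_rank_eq_card_width [Field R] {A : Matrix k m R}
    (hA : A.rank = Fintype.card m) : Function.Injective A.mulVec := by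
  have hker : Module.finrank R (LinearMap.ker A.mulVecLin) = 0 := by
    have := A.mulVecLin.finrank_range_add_finrank_ker
    rw [← rank, hA, Module.finrank_fintype_fun_eq_card] at this
    omega
  rw [← coe_mulVecLin, ← LinearMap.ker_eq_bot, ← Submodule.finrank_eq_zero, hker]

theorem rank_eq_card_width_of_mulVec_injective [Field R] {A : Matrix k m R}
    (hA : Function.Injective A.mulVec) : A.rank = Fintype.card m := by
  rw [rank, LinearMap.finrank_range_of_inj hA, Module.finrank_fintype_fun_eq_card]

theorem mulVec_injective_fromBlocks_one_zero [CommRing R] [DecidableEq l] {A : Matrix l l R}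
    {B : Matrix l m R} (hB : Function.Injective B.mulVec) :
    Function.Injective (fromBlocks (1 : Matrix l l R) 0 A B).mulVec := by
  rw [← coe_mulVecLin, injective_iff_map_eq_zero]
  intro v hv
  rw [coe_mulVecLin, fromBlocks_mulVec, one_mulVec, zero_mulVec, add_zero,
    ← Sum.elim_zero_zero, Sum.elim_eq_iff] at hv
  obtain ⟨hx, hu⟩ := hv
  rw [hx, mulVec_zero, zero_add, ← mulVec_zero B] at hu
  rw [← Sum.elim_comp_inl_inr v, hx, hB hu, Sum.elim_zero_zero]

theorem rank_fromBlocks_one_zero_of_rank_eq [Field R] [DecidableEq l] (A : Matrix l l R)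
    {B : Matrix l m R} (hB : B.rank = Fintype.card m) :
    (fromBlocks (1 : Matrix l l R) 0 A B).rank = Fintype.card l + Fintype.card m := by
  rw [rank_eq_card_width_of_mulVec_injective
    (mulVec_injective_fromBlocks_one_zero (mulVec_injective_of_rank_eq_card_width hB)),
    Fintype.card_sum]

end Matrix

theorem stmt_3_general (n m T : ℕ)
    (As Am : Matrix (Fin n) (Fin n) ℝ) (Bs Bm : Matrix (Fin n) (Fin m) ℝ)
    (hBm : Bm.rank = m)
    (Xm : Matrix (Fin n) (Fin T) ℝ) (Um : Matrix (Fin m) (Fin T) ℝ)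
    (Xp : Matrix (Fin n) (Fin T) ℝ) (hXp : Xp = As * Xm + Bs * Um)
    (hincl : LinearMap.range (Matrix.mulVecLin
        (Matrix.fromBlocks (1 : Matrix (Fin n) (Fin n) ℝ) 0 Am Bm)) ≤
      LinearMap.range (Matrix.mulVecLin (Matrix.fromRows Xm Xp))) :
    (Matrix.fromRows Xm Um).rank = n + m := by
  have hblock : (fromBlocks (1 : Matrix (Fin n) (Fin n) ℝ) 0 Am Bm).rank = n + m := by
    simpa using rank_fromBlocks_one_zero_of_rank_eq Am (hBm.trans (Fintype.card_fin m).symm)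
  have hfactor : fromRows Xm Xp = fromBlocks 1 0 As Bs * fromRows Xm Um := by
    rw [fromBlocks_mul_fromRows, hXp, Matrix.one_mul, Matrix.zero_mul, add_zero]
  refine le_antisymm (by simpa using (fromRows Xm Um).rank_le_card_height) ?_
  calc n + m = (fromBlocks 1 0 Am Bm).rank := hblock.symm
    _ ≤ (fromRows Xm Xp).rank := Submodule.finrank_mono hincl
    _ ≤ (fromRows Xm Um).rank := hfactor ▸ rank_mul_le_right _ _

theorem stmt_3 (n m T : ℕ)
    (As Am : Matrix (Fin n) (Fin n) ℝ) (Bs Bm : Matrix (Fin n) (Fin m) ℝ)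
    (hBm : Bm.rank = m)
    (Xm : Matrix (Fin n) (Fin T) ℝ) (Um : Matrix (Fin m) (Fin T) ℝ)
    (Xp : Matrix (Fin n) (Fin T) ℝ) (hXp : Xp = As * Xm + Bs * Um)
    (K : Matrix (Fin m) (Fin n) ℝ) (L : Matrix (Fin m) (Fin m) ℝ)
    (hK : As + Bs * K = Am) (hL : Bs * L = Bm)
    (hincl : LinearMap.range (Matrix.mulVecLin
        (Matrix.fromBlocks (1 : Matrix (Fin n) (Fin n) ℝ) 0 Am Bm)) ≤
      LinearMap.range (Matrix.mulVecLin (Matrix.fromRows Xm Xp))) :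
    (Matrix.fromRows Xm Um).rank = n + m :=
  stmt_3_general n m T As Am Bs Bm hBm Xm Um Xp hXp hincl
end

section
/- Let B_s ∈ ℝ^{n×m}, A_s, A_m ∈ ℝ^{n×n}, B_m ∈ ℝ^{n×p}, and let K̂(t) ∈ ℝ^{m×n}, L̂(t) ∈ ℝ^{m×p} be sequences such that A_s + B_s K̂(t) → A_m and B_s L̂(t) → B_m as t → ∞. Then im(A_m − A_s) ⊆ im(B_s) and im(B_m) ⊆ im(B_s), and hence there exist K ∈ ℝ^{m×n}, L ∈ ℝ^{m×p} with A_s + B_s K = A_m and B_s L = B_m. -/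
/-! The column space of `B` is a finite-dimensional, hence closed, subspace. Every column of
`B * C t` lies in it, so every column of the limit does too; a matrix whose columns lie in the
column space of `B` factors through `B` column by column. Apply this to `Bs * K̂ t → Am - As`
and `Bs * L̂ t → Bm`. -/

open Matrix Filter Topology

namespace Matrix

variable {l m o : Type*}

theorem range_mulVecLin_le_of_tendsto_mul {ι 𝕜 : Type*} [NontriviallyNormedField 𝕜]
    [CompleteSpace 𝕜] [Fintype m] [Fintype o] {f : Filter ι} [f.NeBot]
    {B : Matrix l m 𝕜} {M : Matrix l o 𝕜} {C : ι → Matrix m o 𝕜}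
    (h : Tendsto (fun t => B * C t) f (𝓝 M)) :
    LinearMap.range M.mulVecLin ≤ LinearMap.range B.mulVecLin := by
  rintro _ ⟨v, rfl⟩
  have hv : Tendsto (fun t => (B * C t) *ᵥ v) f (𝓝 (M *ᵥ v)) :=
    ((continuous_id.matrix_mulVec continuous_const).tendsto M).comp h
  refine (Submodule.closed_of_finiteDimensional _).mem_of_tendsto hv (.of_forall fun t => ?_)
  exact ⟨C t *ᵥ v, by simp [mulVec_mulVec]⟩

theorem exists_mul_eq_of_range_mulVecLin_le {R : Type*} [CommSemiring R] [Fintype m] [Fintype o]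
    [DecidableEq o] {B : Matrix l m R} {M : Matrix l o R}
    (h : LinearMap.range M.mulVecLin ≤ LinearMap.range B.mulVecLin) :
    ∃ D : Matrix m o R, B * D = M := by
  obtain ⟨D, hD⟩ := Module.projective_lifting_property B.mulVecLin.rangeRestrict
    (M.mulVecLin.codRestrict _ fun v => h ⟨v, rfl⟩) B.mulVecLin.surjective_rangeRestrict
  refine ⟨LinearMap.toMatrix' D, toLin'.injective ?_⟩
  rw [toLin'_apply', toLin'_apply', mulVecLin_mul, ← toLin'_apply' (LinearMap.toMatrix' D),
    toLin'_toMatrix']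
  exact congrArg ((LinearMap.range B.mulVecLin).subtype ∘ₗ ·) hD

end Matrix

theorem stmt_9 (n m p : ℕ)
    (As Am : Matrix (Fin n) (Fin n) ℝ) (Bs : Matrix (Fin n) (Fin m) ℝ)
    (Bm : Matrix (Fin n) (Fin p) ℝ)
    (Khat : ℕ → Matrix (Fin m) (Fin n) ℝ) (Lhat : ℕ → Matrix (Fin m) (Fin p) ℝ)
    (hK : Tendsto (fun t => As + Bs * Khat t) atTop (nhds Am))
    (hL : Tendsto (fun t => Bs * Lhat t) atTop (nhds Bm)) :
    (LinearMap.range (Matrix.mulVecLin (Am - As)) ≤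
        LinearMap.range (Matrix.mulVecLin Bs)) ∧
    (LinearMap.range (Matrix.mulVecLin Bm) ≤
        LinearMap.range (Matrix.mulVecLin Bs)) ∧
    ∃ (K : Matrix (Fin m) (Fin n) ℝ) (L : Matrix (Fin m) (Fin p) ℝ),
      As + Bs * K = Am ∧ Bs * L = Bm := by
  have hK' : Tendsto (fun t => Bs * Khat t) atTop (𝓝 (Am - As)) := by
    simpa using hK.sub_const As
  have hAm := range_mulVecLin_le_of_tendsto_mul hK'
  have hBm := range_mulVecLin_le_of_tendsto_mul hL
  obtain ⟨K, hK⟩ := exists_mul_eq_of_range_mulVecLin_le hAm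
  obtain ⟨L, hL⟩ := exists_mul_eq_of_range_mulVecLin_le hBm
  exact ⟨hAm, hBm, K, L, by rw [hK, add_sub_cancel], hL⟩
end

section
/- Let X_-, U_- be matrices with X_+ := A_s X_- + B_s U_-, and suppose the column space of [[I,0],[A_m,B_m]] is contained in the column space of [X_-; X_+]. Then every pair (A,B) satisfying X_+ = A X_- + B U_- admits gains: there exist K', L' (possibly depending on the data) such that A + B K' = A_m and B L' = B_m for all (A,B) consistent with the data, where K' := U_- V_1 and L' := U_- V_2 with V_1, V_2 the matrices realizing X_- V_1 = I, X_- V_2 = 0, X_+ V_1 = A_m, X_+ V_2 = B_m. -/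
open Matrix

/-!
Each column of `[[I, 0], [A_m, B_m]]` lies in the column space of `[X_-; X_+]`, so collecting
preimages of the columns gives `V = [V₁ V₂]` with `[X_-; X_+] V = [[I, 0], [A_m, B_m]]`.
Right-multiplying `X_+ = A X_- + B U_-` by `V₁` and by `V₂` then turns `X_- V₁ = I`, `X_- V₂ = 0`
into `A + B U_- V₁ = A_m` and `B U_- V₂ = B_m`.
-/

namespace Matrix

variable {R : Type*} [CommSemiring R] {l m n : Type*} [Fintype n] [Fintype m] [DecidableEq m]

theorem exists_mul_eq_of_range_mulVecLin_le_s13 {X : Matrix l n R} {M : Matrix l m R}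
    (h : LinearMap.range M.mulVecLin ≤ LinearMap.range X.mulVecLin) :
    ∃ V : Matrix n m R, X * V = M := by
  choose w hw using fun j : m => h ⟨Pi.single j 1, rfl⟩
  refine ⟨(of w)ᵀ, ext fun i j => ?_⟩
  have hcol := congrFun (hw j) i
  rw [mulVecLin_apply, mulVecLin_apply, mulVec_single_one] at hcol
  simpa [mul_apply, mulVec, dotProduct] using hcol

end Matrix

theorem stmt_13_general (n m p T : ℕ)
    (Am : Matrix (Fin n) (Fin n) ℝ)
    (Bm : Matrix (Fin n) (Fin p) ℝ)
    (Xm : Matrix (Fin n) (Fin T) ℝ) (Um : Matrix (Fin m) (Fin T) ℝ)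
    (Xp : Matrix (Fin n) (Fin T) ℝ)
    (hincl : LinearMap.range (Matrix.mulVecLin
        (Matrix.fromBlocks (1 : Matrix (Fin n) (Fin n) ℝ) 0 Am Bm)) ≤
      LinearMap.range (Matrix.mulVecLin (Matrix.fromRows Xm Xp))) :
    ∃ (V₁ : Matrix (Fin T) (Fin n) ℝ) (V₂ : Matrix (Fin T) (Fin p) ℝ),
      (Xm * V₁ = 1 ∧ Xm * V₂ = 0 ∧ Xp * V₁ = Am ∧ Xp * V₂ = Bm) ∧
      ∀ (A : Matrix (Fin n) (Fin n) ℝ) (B : Matrix (Fin n) (Fin m) ℝ),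
        Xp = A * Xm + B * Um →
          A + B * (Um * V₁) = Am ∧ B * (Um * V₂) = Bm := by
  obtain ⟨V, hV⟩ := exists_mul_eq_of_range_mulVecLin_le_s13 hincl
  rw [← fromCols_toCols V, fromRows_mul_fromCols] at hV
  obtain ⟨h₁, h₂, h₃, h₄⟩ := fromBlocks_inj.mp hV
  refine ⟨V.toCols₁, V.toCols₂, ⟨h₁, h₂, h₃, h₄⟩, fun A B hAB => ?_⟩
  subst hAB
  exact ⟨by simpa [Matrix.add_mul, Matrix.mul_assoc, h₁] using h₃,
    by simpa [Matrix.add_mul, Matrix.mul_assoc, h₂] using h₄⟩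

theorem stmt_13 (n m p T : ℕ)
    (As Am : Matrix (Fin n) (Fin n) ℝ) (Bs : Matrix (Fin n) (Fin m) ℝ)
    (Bm : Matrix (Fin n) (Fin p) ℝ)
    (Xm : Matrix (Fin n) (Fin T) ℝ) (Um : Matrix (Fin m) (Fin T) ℝ)
    (Xp : Matrix (Fin n) (Fin T) ℝ) (hXp : Xp = As * Xm + Bs * Um)
    (hincl : LinearMap.range (Matrix.mulVecLin
        (Matrix.fromBlocks (1 : Matrix (Fin n) (Fin n) ℝ) 0 Am Bm)) ≤
      LinearMap.range (Matrix.mulVecLin (Matrix.fromRows Xm Xp))) :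
    ∃ (V₁ : Matrix (Fin T) (Fin n) ℝ) (V₂ : Matrix (Fin T) (Fin p) ℝ),
      (Xm * V₁ = 1 ∧ Xm * V₂ = 0 ∧ Xp * V₁ = Am ∧ Xp * V₂ = Bm) ∧
      ∀ (A : Matrix (Fin n) (Fin n) ℝ) (B : Matrix (Fin n) (Fin m) ℝ),
        Xp = A * Xm + B * Um →
          A + B * (Um * V₁) = Am ∧ B * (Um * V₂) = Bm :=
  stmt_13_general n m p T Am Bm Xm Um Xp hincl
end
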